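/- arXiv:2402.15171 — 5 statements merged into one kernel-verified Lean document; each statement's English description precedes it below -/
import Mathlib

section
/- Lemma (martingale separation, deterministic form). Let d ≥ 1, ε > 0, p ∈ ℕ^d, Σ a positive semi-definite d×d real matrix, B ∈ ℝ^d with B_i > 0 for all i, and let a_1,…,a_t ∈ {0,1}^d and x_1,…,x_t ∈ ℝ^d be arbitrary. Define Z_{s,p} = Σ_{k=1}^s d_{a_k} Σ d_{a_k} + d_Σ·diag(((1+ε)^{p_i})_{i∈[d]}) + d·d_B (a positive definite matrix for every s ≥ 0). Then ‖Σ_{s=1}^t d_{a_s} x_s‖²_{Z_{t,p}^{-1}} ≤ 2 Σ_{s=1}^t (d_{a_s} x_s)ᵀ Z_{s−1,p}^{-1} ( Σ_{k=1}^{s−1} d_{a_k} x_k ) + Σ_{s=1}^t ‖d_{a_s} x_s‖²_{Z_{s−1,p}^{-1}}. -/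
/-!
Since `Z_{s+1} = Z_s + d_{a_{s+1}} Σ d_{a_{s+1}}` with a positive semidefinite increment, and
`x ↦ xᵀ A⁻¹ x = max_y (2 yᵀx - yᵀ A y)` is antitone in `A`, the norm of
`M_{t+1} = M_t + d_{a_{t+1}} x_{t+1}` in `Z_{t+1}⁻¹` is at most its norm in `Z_t⁻¹`. Expanding the
latter square and inducting on `t` gives the bound.
-/

open Matrix Finset

noncomputable section

/-- `diag(a)`. -/
def dmat {d : ℕ} (a : Fin d → ℝ) : Matrix (Fin d) (Fin d) ℝ := Matrix.diagonal a

/-- Quadratic form `xᵀ M x`. -/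
def qsq {d : ℕ} (M : Matrix (Fin d) (Fin d) ℝ) (x : Fin d → ℝ) : ℝ := x ⬝ᵥ M.mulVec x

/-- Peeling design matrix `Z_{s,p}` built from a deterministic sequence of actions. -/
def Zdet {d : ℕ} (a : ℕ → Fin d → ℝ) (S : Matrix (Fin d) (Fin d) ℝ) (B : Fin d → ℝ)
    (ε : ℝ) (p : Fin d → ℕ) (s : ℕ) : Matrix (Fin d) (Fin d) ℝ :=
  (∑ k ∈ Finset.Icc 1 s, dmat (a k) * S * dmat (a k))
    + Matrix.diagonal (fun i => S i i) * Matrix.diagonal (fun i => (1+ε)^(p i))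
    + (d : ℝ) • Matrix.diagonal fun i => (B i)^2

namespace Matrix

variable {n : Type*}

lemma PosDef.isSymm {A : Matrix n n ℝ} (hA : A.PosDef) : A.IsSymm :=
  isHermitian_iff_isSymm.mp hA.isHermitian

variable [Fintype n]

lemma IsSymm.dotProduct_mulVec_comm {W : Matrix n n ℝ} (hW : W.IsSymm) (u v : n → ℝ) :
    u ⬝ᵥ W *ᵥ v = v ⬝ᵥ W *ᵥ u := by
  rw [dotProduct_mulVec, ← mulVec_transpose, hW.eq, dotProduct_comm]

lemma IsSymm.dotProduct_add_mulVec_add {W : Matrix n n ℝ} (hW : W.IsSymm) (u v : n → ℝ) :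
    (u + v) ⬝ᵥ W *ᵥ (u + v) = u ⬝ᵥ W *ᵥ u + 2 * (v ⬝ᵥ W *ᵥ u) + v ⬝ᵥ W *ᵥ v := by
  rw [mulVec_add, dotProduct_add, add_dotProduct, add_dotProduct,
    hW.dotProduct_mulVec_comm u v]
  ring

variable [DecidableEq n]

lemma PosDef.mulVec_inv_mulVec {A : Matrix n n ℝ} (hA : A.PosDef) (x : n → ℝ) :
    A *ᵥ A⁻¹ *ᵥ x = x := by
  rw [mulVec_mulVec, mul_nonsing_inv _ (isUnit_iff_ne_zero.mpr hA.det_pos.ne'), one_mulVec]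

-- Completing the square at the maximiser `y = A⁻¹ x`.
lemma PosDef.two_mul_dotProduct_sub_le_dotProduct_inv_mulVec {A : Matrix n n ℝ} (hA : A.PosDef)
    (x y : n → ℝ) : 2 * (y ⬝ᵥ x) - y ⬝ᵥ A *ᵥ y ≤ x ⬝ᵥ A⁻¹ *ᵥ x := by
  have hAz : A *ᵥ A⁻¹ *ᵥ x = x := hA.mulVec_inv_mulVec x
  generalize A⁻¹ *ᵥ x = z at hAz ⊢
  have hsq : (y - z) ⬝ᵥ A *ᵥ (y - z) = y ⬝ᵥ A *ᵥ y - 2 * (y ⬝ᵥ x) + x ⬝ᵥ z := by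
    rw [mulVec_sub, sub_dotProduct, dotProduct_sub, dotProduct_sub,
      hA.isSymm.dotProduct_mulVec_comm z y, hAz, dotProduct_comm z x]
    ring
  have := hA.posSemidef.dotProduct_mulVec_nonneg (y - z)
  rw [star_trivial] at this
  linarith

lemma PosDef.dotProduct_inv_mulVec_le_of_posSemidef_sub {A B : Matrix n n ℝ} (hA : A.PosDef)
    (hAB : (B - A).PosSemidef) (x : n → ℝ) : x ⬝ᵥ B⁻¹ *ᵥ x ≤ x ⬝ᵥ A⁻¹ *ᵥ x := by
  have hB : B.PosDef := by simpa using hA.add_posSemidef hAB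
  have hBy : B *ᵥ B⁻¹ *ᵥ x = x := hB.mulVec_inv_mulVec x
  generalize B⁻¹ *ᵥ x = y at hBy ⊢
  have hgap : y ⬝ᵥ A *ᵥ y ≤ y ⬝ᵥ B *ᵥ y := by
    have := hAB.dotProduct_mulVec_nonneg y
    rw [star_trivial, sub_mulVec, dotProduct_sub] at this
    linarith
  calc x ⬝ᵥ y = 2 * (y ⬝ᵥ x) - y ⬝ᵥ B *ᵥ y := by rw [hBy, dotProduct_comm]; ring
    _ ≤ 2 * (y ⬝ᵥ x) - y ⬝ᵥ A *ᵥ y := by linarith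
    _ ≤ x ⬝ᵥ A⁻¹ *ᵥ x := hA.two_mul_dotProduct_sub_le_dotProduct_inv_mulVec x y

end Matrix

lemma dotProduct_inv_mulVec_sum_le {n : Type*} [Fintype n] [DecidableEq n]
    {Z : ℕ → Matrix n n ℝ} (hZ : ∀ s, (Z s).PosDef) (hZ_mono : ∀ s, (Z (s + 1) - Z s).PosSemidef)
    (y : ℕ → n → ℝ) (t : ℕ) :
    (∑ s ∈ Icc 1 t, y s) ⬝ᵥ (Z t)⁻¹ *ᵥ (∑ s ∈ Icc 1 t, y s)
      ≤ 2 * ∑ s ∈ Icc 1 t, y s ⬝ᵥ (Z (s - 1))⁻¹ *ᵥ (∑ k ∈ Icc 1 (s - 1), y k)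
        + ∑ s ∈ Icc 1 t, y s ⬝ᵥ (Z (s - 1))⁻¹ *ᵥ y s := by
  induction t with
  | zero => simp
  | succ t ih =>
    simp only [sum_Icc_succ_top (Nat.le_add_left 1 t), Nat.add_sub_cancel]
    set Y := ∑ s ∈ Icc 1 t, y s
    calc (Y + y (t + 1)) ⬝ᵥ (Z (t + 1))⁻¹ *ᵥ (Y + y (t + 1))
        ≤ (Y + y (t + 1)) ⬝ᵥ (Z t)⁻¹ *ᵥ (Y + y (t + 1)) :=
          (hZ t).dotProduct_inv_mulVec_le_of_posSemidef_sub (hZ_mono t) _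
      _ = Y ⬝ᵥ (Z t)⁻¹ *ᵥ Y + 2 * (y (t + 1) ⬝ᵥ (Z t)⁻¹ *ᵥ Y)
            + y (t + 1) ⬝ᵥ (Z t)⁻¹ *ᵥ y (t + 1) :=
          (hZ t).inv.isSymm.dotProduct_add_mulVec_add _ _
      _ ≤ _ := by linarith

lemma Matrix.PosSemidef.dmat_mul_mul_dmat {d : ℕ} {S : Matrix (Fin d) (Fin d) ℝ}
    (hS : S.PosSemidef) (v : Fin d → ℝ) : (dmat v * S * dmat v).PosSemidef := by
  simpa [dmat] using hS.mul_mul_conjTranspose_same (dmat v)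

lemma Zdet_succ_sub {d : ℕ} (a : ℕ → Fin d → ℝ) (S : Matrix (Fin d) (Fin d) ℝ) (B : Fin d → ℝ)
    (ε : ℝ) (p : Fin d → ℕ) (s : ℕ) :
    Zdet a S B ε p (s + 1) - Zdet a S B ε p s = dmat (a (s + 1)) * S * dmat (a (s + 1)) := by
  simp only [Zdet, sum_Icc_succ_top (Nat.le_add_left 1 s)]
  abel

lemma Zdet_posDef {d : ℕ} {ε : ℝ} (hε : 0 < ε) (p : Fin d → ℕ) {S : Matrix (Fin d) (Fin d) ℝ}
    (hS : S.PosSemidef) {B : Fin d → ℝ} (hB : ∀ i, 0 < B i) (a : ℕ → Fin d → ℝ) (s : ℕ) :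
    (Zdet a S B ε p s).PosDef := by
  refine PosDef.posSemidef_add (.add ?_ ?_) ?_
  · exact posSemidef_sum _ fun k _ => hS.dmat_mul_mul_dmat (a k)
  · rw [diagonal_mul_diagonal, posSemidef_diagonal_iff]
    exact fun i => mul_nonneg hS.diag_nonneg (pow_nonneg (by linarith) _)
  · rw [← diagonal_smul, posDef_diagonal_iff]
    exact fun i => mul_pos (Nat.cast_pos.mpr i.pos) (pow_pos (hB i) 2)

theorem martingale_separation_general {d : ℕ} (ε : ℝ) (hε : 0 < ε) (p : Fin d → ℕ)
    (S : Matrix (Fin d) (Fin d) ℝ) (hS : S.PosSemidef)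
    (B : Fin d → ℝ) (hB : ∀ i, 0 < B i)
    (t : ℕ) (a : ℕ → Fin d → ℝ)
    (x : ℕ → Fin d → ℝ) :
    qsq (Zdet a S B ε p t)⁻¹ (∑ s ∈ Finset.Icc 1 t, (dmat (a s)).mulVec (x s))
      ≤ 2 * ∑ s ∈ Finset.Icc 1 t,
            ((dmat (a s)).mulVec (x s)) ⬝ᵥ
              (Zdet a S B ε p (s-1))⁻¹.mulVec
                (∑ k ∈ Finset.Icc 1 (s-1), (dmat (a k)).mulVec (x k))
        + ∑ s ∈ Finset.Icc 1 t, qsq (Zdet a S B ε p (s-1))⁻¹ ((dmat (a s)).mulVec (x s)) :=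
  dotProduct_inv_mulVec_sum_le (Zdet_posDef hε p hS hB a)
    (fun s => Zdet_succ_sub a S B ε p s ▸ hS.dmat_mul_mul_dmat (a (s + 1)))
    (fun s => dmat (a s) *ᵥ x s) t

/-- Lemma (martingale separation, deterministic form):
`‖Σ_{s=1}^t d_{a_s} x_s‖²_{Z_{t,p}^{-1}}
  ≤ 2 Σ_s (d_{a_s} x_s)ᵀ Z_{s−1,p}^{-1} (Σ_{k<s} d_{a_k} x_k) + Σ_s ‖d_{a_s} x_s‖²_{Z_{s−1,p}^{-1}}`. -/
theorem martingale_separation {d : ℕ} (hd : 1 ≤ d) (ε : ℝ) (hε : 0 < ε) (p : Fin d → ℕ)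
    (S : Matrix (Fin d) (Fin d) ℝ) (hS : S.PosSemidef)
    (B : Fin d → ℝ) (hB : ∀ i, 0 < B i)
    (t : ℕ) (a : ℕ → Fin d → ℝ) (ha : ∀ s i, a s i = 0 ∨ a s i = 1)
    (x : ℕ → Fin d → ℝ) :
    qsq (Zdet a S B ε p t)⁻¹ (∑ s ∈ Finset.Icc 1 t, (dmat (a s)).mulVec (x s))
      ≤ 2 * ∑ s ∈ Finset.Icc 1 t,
            ((dmat (a s)).mulVec (x s)) ⬝ᵥ
              (Zdet a S B ε p (s-1))⁻¹.mulVec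
                (∑ k ∈ Finset.Icc 1 (s-1), (dmat (a k)).mulVec (x k))
        + ∑ s ∈ Finset.Icc 1 t, qsq (Zdet a S B ε p (s-1))⁻¹ ((dmat (a s)).mulVec (x s)) :=
  martingale_separation_general ε hε p S hS B hB t a x

end
end

section
/- Proposition (gap bound under the favorable events, deterministic form). Let 𝒜 ⊆ {0,1}^d be a nonempty finite set, μ, μ̂ ∈ ℝ^d, f ≥ 0, D an invertible diagonal d×d matrix, Z a positive definite d×d matrix, and Ẑ a symmetric d×d matrix such that aᵀ D^{-1} Ẑ D^{-1} a ≥ 0 for every a ∈ 𝒜, with ‖x‖_Ẑ := √(xᵀ Ẑ x). Assume: (i) for all a ∈ 𝒜, |⟨a, μ̂ − μ⟩| ≤ f·‖D^{-1} a‖_Z; (ii) for all a ∈ 𝒜, ‖D^{-1} a‖_Z ≤ ‖D^{-1} a‖_Ẑ; (iii) A ∈ 𝒜 satisfies ⟨A, μ̂⟩ + f·‖D^{-1} A‖_Ẑ ≥ ⟨a, μ̂⟩ + f·‖D^{-1} a‖_Ẑ for all a ∈ 𝒜. Then for any a* ∈ 𝒜 maximizing ⟨a, μ⟩ over 𝒜,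 the gap Δ_A = ⟨a* − A, μ⟩ satisfies Δ_A ≤ f·( ‖D^{-1} A‖_Z + ‖D^{-1} A‖_Ẑ ). -/
open Matrix Finset

noncomputable section

/-- `‖x‖_M = √(xᵀ M x)`. -/
def qnorm {d : ℕ} (M : Matrix (Fin d) (Fin d) ℝ) (x : Fin d → ℝ) : ℝ := Real.sqrt (qsq M x)

/-- Proposition (gap bound under the favorable events, deterministic form). -/
theorem gap_bound_favorable_events {d : ℕ}
    (𝒜 : Finset (Fin d → ℝ)) (h𝒜 : 𝒜.Nonempty)
    (μ μhat : Fin d → ℝ) (f : ℝ) (hf : 0 ≤ f)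
    (Dv : Fin d → ℝ) (hDv : ∀ i, Dv i ≠ 0)
    (Z : Matrix (Fin d) (Fin d) ℝ) (hZ : Z.PosDef)
    (Zhat : Matrix (Fin d) (Fin d) ℝ) (hZhat : Zhat.IsSymm)
    (hZhatpos : ∀ a ∈ 𝒜, 0 ≤ qsq Zhat ((Matrix.diagonal Dv)⁻¹.mulVec a))
    (hconc : ∀ a ∈ 𝒜, |a ⬝ᵥ (μhat - μ)| ≤ f * qnorm Z ((Matrix.diagonal Dv)⁻¹.mulVec a))
    (hdom : ∀ a ∈ 𝒜, qnorm Z ((Matrix.diagonal Dv)⁻¹.mulVec a)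
        ≤ qnorm Zhat ((Matrix.diagonal Dv)⁻¹.mulVec a))
    (A : Fin d → ℝ) (hA : A ∈ 𝒜)
    (hargmax : ∀ a ∈ 𝒜,
        a ⬝ᵥ μhat + f * qnorm Zhat ((Matrix.diagonal Dv)⁻¹.mulVec a)
          ≤ A ⬝ᵥ μhat + f * qnorm Zhat ((Matrix.diagonal Dv)⁻¹.mulVec A))
    (astar : Fin d → ℝ) (hstar : astar ∈ 𝒜) (hopt : ∀ a ∈ 𝒜, a ⬝ᵥ μ ≤ astar ⬝ᵥ μ) :
    (astar - A) ⬝ᵥ μ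
      ≤ f * (qnorm Z ((Matrix.diagonal Dv)⁻¹.mulVec A)
            + qnorm Zhat ((Matrix.diagonal Dv)⁻¹.mulVec A)) := by
  have h1 := hconc astar hstar
  have h2 := hdom astar hstar
  have h3 := hargmax astar hstar
  have h4 := hconc A hA
  rw [sub_dotProduct]
  have e1 : astar ⬝ᵥ (μhat - μ) = astar ⬝ᵥ μhat - astar ⬝ᵥ μ := by
    simp [dotProduct_sub]
  have e2 : A ⬝ᵥ (μhat - μ) = A ⬝ᵥ μhat - A ⬝ᵥ μ := by
    simp [dotProduct_sub]
  rw [e1] at h1; rw [e2] at h4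
  have a1 := abs_le.mp h1
  have a2 := abs_le.mp h4
  nlinarith [mul_le_mul_of_nonneg_left h2 hf]

end
end

section
/- Lemma (moment generating function of a bounded centered random variable). Let X be a real random variable with E[X] = 0, |X| ≤ b almost surely for some b > 0, and E[X²] ≤ σ² for some σ² > 0. Then for every real λ with |λ| ≤ 1/(2b), E[ exp( λX − λ²σ² ) ] ≤ 1. -/
open MeasureTheory

lemma exp_le_one_add_add_sq {x : ℝ} (hx : |x| ≤ 1) : Real.exp x ≤ 1 + x + x ^ 2 := by
  have hx1 : x ≤ 1 := le_trans (le_abs_self x) hx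
  have hx2 : -1 ≤ x := neg_le_of_abs_le hx
  rcases le_or_gt x 0 with h | h
  · have h1 : (0:ℝ) < 1 - x := by linarith
    have h2 : Real.exp x ≤ (1 - x)⁻¹ := by
      have h3 : 1 - x ≤ Real.exp (-x) := by
        have := Real.add_one_le_exp (-x); linarith
      calc Real.exp x = (Real.exp (-x))⁻¹ := by rw [← Real.exp_neg, neg_neg]
        _ ≤ (1 - x)⁻¹ := inv_anti₀ h1 h3
    calc Real.exp x ≤ (1 - x)⁻¹ := h2
      _ ≤ 1 + x + x ^ 2 := by
          rw [inv_le_iff_one_le_mul₀ h1]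
          nlinarith
  · calc Real.exp x
        ≤ ∑ i ∈ Finset.range 3, x ^ i / i.factorial + x ^ 3 * ((3:ℕ) + 1) / ((Nat.factorial 3 : ℕ) * (3:ℕ)) :=
          Real.exp_bound' h.le hx1 zero_lt_three
      _ ≤ 1 + x + x ^ 2 := by
          rw [Finset.sum_range_succ, Finset.sum_range_succ, Finset.sum_range_succ]
          norm_num [Nat.factorial]
          nlinarith [mul_le_mul_of_nonneg_left hx1 (sq_nonneg x)]

/-- Lemma (moment generating function of a bounded centered random variable):
if `E[X] = 0`, `|X| ≤ b` a.s. and `E[X²] ≤ σ²`, then for `|λ| ≤ 1/(2b)`,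
`E[exp(λX − λ²σ²)] ≤ 1`. -/
theorem mgf_bounded_centered
    {Ω : Type} [MeasurableSpace Ω] (P : Measure Ω) [IsProbabilityMeasure P]
    (X : Ω → ℝ) (hXmeas : Measurable X)
    (b : ℝ) (hb : 0 < b) (hXbdd : ∀ᵐ ω ∂P, |X ω| ≤ b)
    (hX0 : ∫ ω, X ω ∂P = 0)
    (σ2 : ℝ) (hσ2 : 0 < σ2) (hXvar : ∫ ω, (X ω)^2 ∂P ≤ σ2)
    (l : ℝ) (hl : |l| ≤ 1/(2*b)) :
    ∫ ω, Real.exp (l * X ω - l^2 * σ2) ∂P ≤ 1 := by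
  -- pointwise bound
  have hbd : ∀ᵐ ω ∂P, Real.exp (l * X ω) ≤ 1 + l * X ω + l ^ 2 * (X ω) ^ 2 := by
    filter_upwards [hXbdd] with ω h
    have habs : |l * X ω| ≤ 1 := by
      rw [abs_mul]
      calc |l| * |X ω| ≤ (1/(2*b)) * b := by
            apply mul_le_mul hl h (abs_nonneg _) (by positivity)
        _ ≤ 1 := by rw [div_mul_eq_mul_div]; rw [div_le_one (by positivity)]; nlinarith
    have := exp_le_one_add_add_sq habs
    nlinarith [this]
  -- integrability
  have intX : Integrable X P :=
    (integrable_const b).mono' hXmeas.aestronglyMeasurable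
      (hXbdd.mono fun ω h => by simpa using h)
  have intX2 : Integrable (fun ω => (X ω) ^ 2) P :=
    (integrable_const (b ^ 2)).mono' ((hXmeas.pow_const 2).aestronglyMeasurable)
      (hXbdd.mono fun ω h => by
        simp only [norm_pow, Real.norm_eq_abs, sq_abs]
        nlinarith [abs_nonneg (X ω), le_abs_self (X ω), neg_abs_le (X ω)])
  have intexp : Integrable (fun ω => Real.exp (l * X ω)) P := by
    refine (integrable_const (Real.exp (|l| * b))).mono'
      ((Real.measurable_exp.comp (hXmeas.const_mul l)).aestronglyMeasurable)
      (hXbdd.mono fun ω h => ?_)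
    rw [Real.norm_eq_abs, abs_of_pos (Real.exp_pos _)]
    apply Real.exp_le_exp.2
    calc l * X ω ≤ |l * X ω| := le_abs_self _
      _ = |l| * |X ω| := abs_mul _ _
      _ ≤ |l| * b := by nlinarith [abs_nonneg l]
  -- integral bound
  have key : ∫ ω, Real.exp (l * X ω) ∂P ≤ 1 + l ^ 2 * σ2 := by
    have h1 : ∫ ω, Real.exp (l * X ω) ∂P ≤ ∫ ω, (1 + l * X ω + l ^ 2 * (X ω) ^ 2) ∂P := by
      apply integral_mono_ae intexp _ hbd
      exact ((integrable_const 1).add (intX.const_mul l)).add (intX2.const_mul (l ^ 2))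
    have h2 : ∫ ω, (1 + l * X ω + l ^ 2 * (X ω) ^ 2) ∂P
        = 1 + l * ∫ ω, X ω ∂P + l ^ 2 * ∫ ω, (X ω) ^ 2 ∂P := by
      have e1 : ∫ ω, (1 + l * X ω + l ^ 2 * (X ω) ^ 2) ∂P
          = (∫ ω, (1 + l * X ω) ∂P) + ∫ ω, l ^ 2 * (X ω) ^ 2 ∂P :=
        integral_add ((integrable_const 1).add (intX.const_mul l)) (intX2.const_mul (l ^ 2))
      have e2 : ∫ ω, (1 + l * X ω) ∂P = (∫ ω, (1:ℝ) ∂P) + ∫ ω, l * X ω ∂P :=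
        integral_add (integrable_const 1) (intX.const_mul l)
      rw [e1, e2, integral_const, integral_const_mul, integral_const_mul]
      simp
    rw [h2, hX0] at h1
    have : l ^ 2 * ∫ ω, (X ω) ^ 2 ∂P ≤ l ^ 2 * σ2 := by
      apply mul_le_mul_of_nonneg_left hXvar (sq_nonneg l)
    linarith
  have hsplit : ∀ ω, Real.exp (l * X ω - l ^ 2 * σ2)
      = Real.exp (l * X ω) / Real.exp (l ^ 2 * σ2) := fun ω => Real.exp_sub _ _
  calc ∫ ω, Real.exp (l * X ω - l ^ 2 * σ2) ∂P
      = (∫ ω, Real.exp (l * X ω) ∂P) / Real.exp (l ^ 2 * σ2) := by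
        simp_rw [hsplit]; exact integral_div _ _
    _ ≤ (1 + l ^ 2 * σ2) / Real.exp (l ^ 2 * σ2) := by
        gcongr
    _ ≤ 1 := by
        rw [div_le_one (Real.exp_pos _)]
        have := Real.add_one_le_exp (l ^ 2 * σ2)
        linarith
end

section
/- Lemma (summation-by-parts counting bound, inverse rate). Let q ≥ 1 be an integer, let v_1 ≥ v_2 ≥ … ≥ v_q > 0 be reals, and let C > 0. Then ⌊C/v_q⌋·v_q + Σ_{p=1}^{q−1} ⌊C/v_p⌋·(v_p − v_{p+1}) ≤ C·( 1 + log(v_1/v_q) ). -/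
/-!
Since `⌊C / x⌋ ≤ C / x`, the last term is at most `C`, and the `p`-th summand is at most
`C (1 - v_{p+1} / v_p) ≤ C log (v_p / v_{p+1})` by `1 - t⁻¹ ≤ log t`; these logarithms telescope
to `C log (v_1 / v_q)`.
-/

open Finset

lemma Int.floor_div_mul_le_of_pos {a b : ℝ} (hb : 0 < b) : (⌊a / b⌋ : ℝ) * b ≤ a :=
  calc (⌊a / b⌋ : ℝ) * b ≤ a / b * b := by gcongr; exact Int.floor_le _
    _ = a := div_mul_cancel₀ a hb.ne'

lemma Int.floor_div_mul_sub_le_mul_log {C x y : ℝ} (hC : 0 ≤ C) (hy : 0 < y) (hyx : y ≤ x) :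
    (⌊C / x⌋ : ℝ) * (x - y) ≤ C * Real.log (x / y) := by
  have hx : 0 < x := hy.trans_le hyx
  calc (⌊C / x⌋ : ℝ) * (x - y) ≤ C / x * (x - y) := by
        gcongr; exact Int.floor_le _
    _ = C * (1 - (x / y)⁻¹) := by field_simp
    _ ≤ C * Real.log (x / y) := by gcongr; exact Real.one_sub_inv_le_log_of_pos (by positivity)

lemma sum_Ico_floor_div_mul_sub_le {C : ℝ} (hC : 0 ≤ C) {m n : ℕ} (hmn : m ≤ n) (v : ℕ → ℝ)
    (hmono : ∀ p, m ≤ p → p < n → v (p + 1) ≤ v p) (hpos : ∀ p, m ≤ p → p ≤ n → 0 < v p) :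
    ∑ p ∈ Ico m n, (⌊C / v p⌋ : ℝ) * (v p - v (p + 1)) ≤ C * Real.log (v m / v n) := by
  have hlog : ∀ p ∈ Ico m n, Real.log (v p / v (p + 1)) = Real.log (v p) - Real.log (v (p + 1)) :=
    fun p hp ↦ by
      rw [mem_Ico] at hp
      exact Real.log_div (hpos p hp.1 hp.2.le).ne' (hpos (p + 1) (by omega) hp.2).ne'
  calc ∑ p ∈ Ico m n, (⌊C / v p⌋ : ℝ) * (v p - v (p + 1))
      ≤ ∑ p ∈ Ico m n, C * Real.log (v p / v (p + 1)) := by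
        refine sum_le_sum fun p hp ↦ ?_
        rw [mem_Ico] at hp
        exact Int.floor_div_mul_sub_le_mul_log hC (hpos (p + 1) (by omega) hp.2) (hmono p hp.1 hp.2)
    _ = C * (Real.log (v m) - Real.log (v n)) := by
        have htel := sum_Ico_sub (fun p ↦ Real.log (v p)) hmn
        rw [sum_sub_distrib] at htel
        rw [← mul_sum, sum_congr rfl hlog, sum_sub_distrib]
        linear_combination (-C) * htel
    _ = C * Real.log (v m / v n) := by
        rw [Real.log_div (hpos m le_rfl hmn).ne' (hpos n hmn le_rfl).ne']

/-- Lemma (summation-by-parts counting bound, inverse rate):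
for `v_1 ≥ … ≥ v_q > 0` and `C > 0`,
`⌊C/v_q⌋·v_q + Σ_{p=1}^{q−1} ⌊C/v_p⌋·(v_p − v_{p+1}) ≤ C (1 + log(v_1/v_q))`. -/
theorem counting_bound_inverse (q : ℕ) (hq : 1 ≤ q) (v : ℕ → ℝ)
    (hmono : ∀ p, 1 ≤ p → p < q → v (p+1) ≤ v p)
    (hpos : ∀ p, 1 ≤ p → p ≤ q → 0 < v p)
    (C : ℝ) (hC : 0 < C) :
    (⌊C / v q⌋ : ℝ) * v q
        + ∑ p ∈ Finset.Icc 1 (q-1), (⌊C / v p⌋ : ℝ) * (v p - v (p+1))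
      ≤ C * (1 + Real.log (v 1 / v q)) := by
  have hlast := Int.floor_div_mul_le_of_pos (a := C) (hpos q hq le_rfl)
  have hsum := sum_Ico_floor_div_mul_sub_le hC.le hq v hmono hpos
  have hq_not_min : ¬IsMin q := by simp only [isMin_iff_eq_bot, Nat.bot_eq_zero]; omega
  rw [Icc_sub_one_right_eq_Ico_of_not_isMin hq_not_min]
  linarith
end

section
/- Lemma (summation-by-parts counting bound, inverse 4/3 rate). Let q ≥ 1 be an integer, let v_1 ≥ v_2 ≥ … ≥ v_q > 0 be reals, and let C > 0. Then ⌊C/v_q^{4/3}⌋·v_q + Σ_{p=1}^{q−1} ⌊C/v_p^{4/3}⌋·(v_p − v_{p+1}) ≤ 4C / v_q^{1/3}. -/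
/-!
Drop the floors. The last term is then `C / v_q^{1/3}`. For the sum, the tangent-line bound
for the convex function `x ↦ x^{-1/3}` gives
`(v_p - v_{p+1}) / v_p^{4/3} ≤ 3 (v_{p+1}^{-1/3} - v_p^{-1/3})`, so the sum telescopes to
at most `3C / v_q^{1/3}`.
-/

open Finset

namespace Real

theorem one_add_mul_one_sub_le_rpow_neg {r t : ℝ} (hr0 : 0 ≤ r) (hr1 : r ≤ 1) (ht : 0 < t) :
    1 + r * (1 - t) ≤ t ^ (-r) := by
  have hconc : t ^ r ≤ 1 + r * (t - 1) := by
    simpa using rpow_one_add_le_one_add_mul_self (s := t - 1) (by linarith) hr0 hr1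
  have hy : 0 < t ^ r := rpow_pos_of_pos ht r
  -- Multiplying Bernoulli's bound by `1 + r(1 - t)` leaves `1 - (r(1 - t))² ≤ 1`.
  rw [rpow_neg ht.le, ← one_div, le_div_iff₀ hy]
  rcases le_total 0 (1 + r * (1 - t)) with hX | hX
  · nlinarith [mul_le_mul_of_nonneg_left hconc hX, sq_nonneg (r * (1 - t))]
  · nlinarith

theorem mul_sub_div_rpow_add_one_le {r a b : ℝ} (hr0 : 0 ≤ r) (hr1 : r ≤ 1) (ha : 0 < a)
    (hb : 0 < b) : r * (a - b) / a ^ (r + 1) ≤ b ^ (-r) - a ^ (-r) := by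
  have h := one_add_mul_one_sub_le_rpow_neg hr0 hr1 (div_pos hb ha)
  have har : 0 < a ^ r := rpow_pos_of_pos ha r
  rw [div_rpow hb.le ha.le, rpow_neg ha.le, div_inv_eq_mul] at h
  rw [rpow_add_one ha.ne', rpow_neg ha.le, div_le_iff₀ (by positivity)]
  field_simp at h ⊢
  nlinarith

end Real

theorem mul_sum_Ico_sub_div_rpow_le {r : ℝ} (hr0 : 0 ≤ r) (hr1 : r ≤ 1) {q : ℕ} (hq : 1 ≤ q)
    {v : ℕ → ℝ} (hpos : ∀ p, 1 ≤ p → p ≤ q → 0 < v p) :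
    r * ∑ p ∈ Ico 1 q, (v p - v (p + 1)) / v p ^ (r + 1) ≤ v q ^ (-r) - v 1 ^ (-r) := by
  rw [mul_sum, ← sum_Ico_sub (fun p ↦ v p ^ (-r)) hq]
  refine sum_le_sum fun p hp ↦ ?_
  rw [mem_Ico] at hp
  rw [← mul_div_assoc]
  exact Real.mul_sub_div_rpow_add_one_le hr0 hr1 (hpos p hp.1 hp.2.le)
    (hpos (p + 1) (by omega) hp.2)

/-- Lemma (summation-by-parts counting bound, inverse 4/3 rate):
for `v_1 ≥ … ≥ v_q > 0` and `C > 0`,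
`⌊C/v_q^{4/3}⌋·v_q + Σ_{p=1}^{q−1} ⌊C/v_p^{4/3}⌋·(v_p − v_{p+1}) ≤ 4C/v_q^{1/3}`. -/
theorem counting_bound_inverse_four_thirds (q : ℕ) (hq : 1 ≤ q) (v : ℕ → ℝ)
    (hmono : ∀ p, 1 ≤ p → p < q → v (p+1) ≤ v p)
    (hpos : ∀ p, 1 ≤ p → p ≤ q → 0 < v p)
    (C : ℝ) (hC : 0 < C) :
    (⌊C / (v q) ^ ((4:ℝ)/3)⌋ : ℝ) * v q
        + ∑ p ∈ Finset.Icc 1 (q-1), (⌊C / (v p) ^ ((4:ℝ)/3)⌋ : ℝ) * (v p - v (p+1))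
      ≤ 4 * C / (v q) ^ ((1:ℝ)/3) := by
  have hvq : 0 < v q := hpos q hq le_rfl
  rw [show (4:ℝ)/3 = 1/3 + 1 by norm_num,
    Icc_sub_one_right_eq_Ico_of_not_isMin (by simp; omega)]
  have hlast : (⌊C / v q ^ ((1:ℝ)/3 + 1)⌋ : ℝ) * v q ≤ C / v q ^ ((1:ℝ)/3) := by
    calc (⌊C / v q ^ ((1:ℝ)/3 + 1)⌋ : ℝ) * v q ≤ C / v q ^ ((1:ℝ)/3 + 1) * v q := by
          gcongr; exact Int.floor_le _
      _ = C / v q ^ ((1:ℝ)/3) := by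
          rw [Real.rpow_add_one hvq.ne']; field_simp
  have hsum : ∑ p ∈ Ico 1 q, (⌊C / v p ^ ((1:ℝ)/3 + 1)⌋ : ℝ) * (v p - v (p+1))
      ≤ C * ∑ p ∈ Ico 1 q, (v p - v (p+1)) / v p ^ ((1:ℝ)/3 + 1) := by
    rw [mul_sum]
    refine sum_le_sum fun p hp ↦ ?_
    rw [mem_Ico] at hp
    have hdrop : 0 ≤ v p - v (p + 1) := sub_nonneg.2 (hmono p hp.1 hp.2)
    calc (⌊C / v p ^ ((1:ℝ)/3 + 1)⌋ : ℝ) * (v p - v (p+1))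
        ≤ C / v p ^ ((1:ℝ)/3 + 1) * (v p - v (p+1)) := by gcongr; exact Int.floor_le _
      _ = C * ((v p - v (p+1)) / v p ^ ((1:ℝ)/3 + 1)) := by ring
  have htele := mul_sum_Ico_sub_div_rpow_le (r := 1/3) (by norm_num) (by norm_num) hq hpos
  have hv1 : 0 < v 1 ^ (-(1/3 : ℝ)) := Real.rpow_pos_of_pos (hpos 1 le_rfl hq) _
  have hS : ∑ p ∈ Ico 1 q, (v p - v (p+1)) / v p ^ ((1:ℝ)/3 + 1)
      ≤ 3 * (v q ^ ((1:ℝ)/3))⁻¹ := by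
    rw [Real.rpow_neg hvq.le] at htele
    linarith
  calc _ ≤ C / v q ^ ((1:ℝ)/3) + C * (3 * (v q ^ ((1:ℝ)/3))⁻¹) := by
        gcongr; exact hsum.trans (by gcongr)
    _ = 4 * C / v q ^ ((1:ℝ)/3) := by ring
end
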